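/- arXiv:1410.2446 — 4 statements merged into one kernel-verified Lean document; each statement's English description precedes it below -/
import Mathlib

section
/- For every integer k ≥ 1 and every a ∈ ℤ, the following identity (the sl₂ T-system) holds in R: χ(k,a)·χ(k,a+2) = χ(k+1,a)·χ(k−1,a+2) + 1. -/
/-!
`R` is the Laurent polynomial ring over `ℤ` in countably many commuting variables
`Y n`, `n : ℤ`, realised as the group algebra of the free abelian group `ℤ →₀ ℤ`.
`Y n e` denotes the monomial `(Y_n)^e`.
-/

/-- The Laurent polynomial ring `ℤ[Y_n^{±1} : n ∈ ℤ]`. -/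
abbrev R : Type := AddMonoidAlgebra ℤ (ℤ →₀ ℤ)

/-- The monomial `Y_n^e`. -/
noncomputable def Y (n e : ℤ) : R := AddMonoidAlgebra.single (Finsupp.single n e) 1

/-- The `q`-character of the Kirillov–Reshetikhin module `W^{(1)}_{k,q^a}`:
`χ(k,a) = Σ_{i=0}^{k} (Π_{t=0}^{k−1−i} Y_{a+2t}) · (Π_{t=k+1−i}^{k} Y_{a+2t}^{−1})`. -/
noncomputable def chi (k : ℕ) (a : ℤ) : R :=
  ∑ i ∈ Finset.range (k + 1),
    (∏ t ∈ Finset.range (k - i), Y (a + 2 * (t : ℤ)) 1) *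
      ∏ t ∈ Finset.Icc (k + 1 - i) k, Y (a + 2 * (t : ℤ)) (-1)

/-!
Peeling off the first variable and the last inverse variable gives the two recursions
`χ(k+1,a) = Y_a χ(k,a+2) + L_{k+1}(a)` and `χ(k+1,a) = H_{k+1}(a) + Y_{a+2k+2}⁻¹ χ(k,a)`,
where `H_k(a) = Y_a ⋯ Y_{a+2k-2}` and `L_k(a) = Y_{a+2}⁻¹ ⋯ Y_{a+2k}⁻¹` are the highest and
lowest monomials of `χ(k,a)`. Expanding `χ(k,a)` and `χ(k+1,a)` by the first recursion, the
`Y_a`-terms of both sides of the T-system agree, and what remains reduces, by the second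
recursion for `χ(k,a+2)`, to `L_k(a) H_k(a+2) = 1`.
-/

open Finset

theorem Finset.prod_Icc_add_one {M : Type*} [CommMonoid M] (f : ℕ → M) (m n : ℕ) :
    ∏ t ∈ Icc (m + 1) (n + 1), f t = ∏ t ∈ Icc m n, f (t + 1) := by
  rw [← map_add_right_Icc, prod_map]
  rfl

lemma Y_mul_Y (n e f : ℤ) : Y n e * Y n f = Y n (e + f) := by
  rw [Y, Y, Y, AddMonoidAlgebra.single_mul_single, Finsupp.single_add, mul_one]

lemma Y_zero (n : ℤ) : Y n 0 = 1 := by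
  rw [Y, Finsupp.single_zero]
  rfl

lemma Y_one_mul_Y_neg_one (n : ℤ) : Y n 1 * Y n (-1) = 1 := by
  rw [Y_mul_Y, add_neg_cancel, Y_zero]

noncomputable def highestMonomial (k : ℕ) (a : ℤ) : R :=
  ∏ t ∈ range k, Y (a + 2 * (t : ℤ)) 1

noncomputable def lowestMonomial (k : ℕ) (a : ℤ) : R :=
  ∏ t ∈ Icc 1 k, Y (a + 2 * (t : ℤ)) (-1)

lemma lowestMonomial_succ (k : ℕ) (a : ℤ) :
    lowestMonomial (k + 1) a = lowestMonomial k a * Y (a + 2 * (k + 1 : ℤ)) (-1) := by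
  rw [lowestMonomial, prod_Icc_succ_top (by omega), lowestMonomial]
  push_cast
  rfl

lemma lowestMonomial_mul_highestMonomial (k : ℕ) (a : ℤ) :
    lowestMonomial k a * highestMonomial k (a + 2) = 1 := by
  induction k with
  | zero => simp [lowestMonomial, highestMonomial]
  | succ k ih =>
    rw [lowestMonomial_succ, highestMonomial, prod_range_succ, ← highestMonomial]
    calc _ = (lowestMonomial k a * highestMonomial k (a + 2)) *
          (Y (a + 2 + 2 * (k : ℤ)) 1 * Y (a + 2 * (k + 1 : ℤ)) (-1)) := by ring
      _ = 1 := by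
        rw [ih, show a + 2 * (k + 1 : ℤ) = a + 2 + 2 * k by ring, Y_one_mul_Y_neg_one, one_mul]

lemma chi_succ_eq_Y_mul_add_lowestMonomial (k : ℕ) (a : ℤ) :
    chi (k + 1) a = Y a 1 * chi k (a + 2) + lowestMonomial (k + 1) a := by
  rw [chi, sum_range_succ, Nat.sub_self, range_zero, prod_empty, one_mul,
    show k + 1 + 1 - (k + 1) = 1 by omega, chi, mul_sum]
  congr 1
  have shift (t : ℕ) : a + 2 * ((t + 1 : ℕ) : ℤ) = a + 2 + 2 * (t : ℤ) := by push_cast; ring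
  refine sum_congr rfl fun i hi => ?_
  obtain ⟨j, rfl⟩ : ∃ j, k = i + j := ⟨k - i, by rw [mem_range] at hi; omega⟩
  rw [show i + j + 1 - i = j + 1 by omega, show i + j + 1 + 1 - i = j + 1 + 1 by omega,
    show i + j - i = j by omega, prod_range_succ', prod_Icc_add_one]
  simp only [shift, Nat.cast_zero, mul_zero, add_zero]
  ring

lemma chi_succ_eq_highestMonomial_add (k : ℕ) (a : ℤ) :
    chi (k + 1) a = highestMonomial (k + 1) a + Y (a + 2 * (k + 1 : ℤ)) (-1) * chi k a := by
  rw [chi, sum_range_succ', Nat.sub_zero, Icc_eq_empty (by omega), prod_empty, mul_one,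
    add_comm, ← highestMonomial, chi, mul_sum]
  congr 1
  refine sum_congr rfl fun i hi => ?_
  rw [mem_range] at hi
  rw [show k + 1 - (i + 1) = k - i by omega, show k + 1 + 1 - (i + 1) = k + 1 - i by omega,
    prod_Icc_succ_top (by omega)]
  push_cast
  ring

/-- The sl₂ T-system: for `k ≥ 1` and `a ∈ ℤ`,
`χ(k,a)·χ(k,a+2) = χ(k+1,a)·χ(k−1,a+2) + 1`. -/
theorem tsystem (k : ℕ) (hk : 1 ≤ k) (a : ℤ) :
    chi k a * chi k (a + 2) = chi (k + 1) a * chi (k - 1) (a + 2) + 1 := by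
  obtain ⟨m, rfl⟩ : ∃ m, k = m + 1 := ⟨k - 1, by omega⟩
  rw [Nat.add_sub_cancel, chi_succ_eq_Y_mul_add_lowestMonomial (m + 1) a,
    lowestMonomial_succ (m + 1) a, chi_succ_eq_Y_mul_add_lowestMonomial m a,
    chi_succ_eq_highestMonomial_add m (a + 2)]
  push_cast
  rw [show a + 2 * ((m : ℤ) + 1 + 1) = a + 2 + 2 * ((m : ℤ) + 1) by ring]
  linear_combination lowestMonomial_mul_highestMonomial (m + 1) a
end

section
/- For all integers a, d, k, r with 1 ≤ d ≤ k+1 ≤ r, the following Ptolemy-type identity holds in R: χ(k+1,a)·χ(r−d+1,a+2d) = χ(r+1,a)·χ(k−d+1,a+2d) + χ(d−1,a)·χ(r−k−1,a+2k+4). (This is the standard exchange relation (1) of Proposition 3.1, expressed through the isomorphism of Theorem 4.1 as an identity of Kirillov–Reshetikhin characters; the two factors on the left correspond to a pair of crossing diagonals of a polygon and the two products on the right to the two pairs of sides of the quadrilateral they span.) -/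
/-!
Write `Yrun b n = Y_b Y_{b+2} ⋯ Y_{b+2(n-1)}`. The `i`-th monomial of `χ(m,b)` is
`Yrun b (m-i) / (Y_{b+2(m+1-i)} ⋯ Y_{b+2m})`, so `χ(m,b) · Yrun b (m+1) = Σ_{j ≤ m} w_j` with
`w_j = Yrun b j · Yrun b (j+1)`; more generally `χ(m, b+2d)` becomes, up to a unit, the interval
sum `Σ_{d ≤ j < d+m+1} w_j`. Every character in the identity is therefore a unit multiple of
a sum of the `w_j` over an interval with endpoints among `0 ≤ d ≤ k+2 ≤ r+2`, and the identity
becomes Ptolemy's relation `(A+B)(B+C) = (A+B+C)B + AC` for the three consecutive blocks.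
-/

open Finset

theorem Finset.sum_Ico_mul_sum_Ico_ptolemy {α : Type*} [CommRing α] (f : ℕ → α)
    {i j k l : ℕ} (hij : i ≤ j) (hjk : j ≤ k) (hkl : k ≤ l) :
    (∑ x ∈ Ico i k, f x) * ∑ x ∈ Ico j l, f x =
      (∑ x ∈ Ico i l, f x) * (∑ x ∈ Ico j k, f x) +
        (∑ x ∈ Ico i j, f x) * ∑ x ∈ Ico k l, f x := by
  rw [← sum_Ico_consecutive f hij hjk, ← sum_Ico_consecutive f hjk hkl,
    ← sum_Ico_consecutive f hij (hjk.trans hkl), ← sum_Ico_consecutive f hjk hkl]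
  ring

noncomputable def Yrun (b : ℤ) (n : ℕ) : R := ∏ t ∈ range n, Y (b + 2 * (t : ℤ)) 1

lemma Y_neg_one_mul_Y_one (n : ℤ) : Y n (-1) * Y n 1 = 1 := by
  rw [Y, Y, AddMonoidAlgebra.single_mul_single, ← Finsupp.single_add, neg_add_cancel,
    Finsupp.single_zero, mul_one]
  rfl

lemma prod_Y_neg_one_mul_prod_Y_one (b : ℤ) (s : Finset ℕ) :
    (∏ t ∈ s, Y (b + 2 * (t : ℤ)) (-1)) * ∏ t ∈ s, Y (b + 2 * (t : ℤ)) 1 = 1 := by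
  rw [← prod_mul_distrib]
  exact prod_eq_one fun t _ => Y_neg_one_mul_Y_one _

lemma isUnit_Yrun (b : ℤ) (n : ℕ) : IsUnit (Yrun b n) :=
  .of_mul_eq_one _ (mul_comm (Yrun b n) _ ▸ prod_Y_neg_one_mul_prod_Y_one b (range n))

lemma Yrun_eq_mul_prod_Ico (b : ℤ) {m n : ℕ} (h : m ≤ n) :
    Yrun b n = Yrun b m * ∏ t ∈ Ico m n, Y (b + 2 * (t : ℤ)) 1 := by
  rw [Yrun, Yrun, range_eq_Ico, range_eq_Ico, prod_Ico_consecutive _ (Nat.zero_le m) h]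

lemma Yrun_add (b : ℤ) (m n : ℕ) : Yrun b (m + n) = Yrun b m * Yrun (b + 2 * m) n := by
  rw [Yrun, prod_range_add]
  congr 1
  refine prod_congr rfl fun t _ => ?_
  congr 1
  push_cast
  ring

lemma chi_mul_Yrun_succ (b : ℤ) (m : ℕ) :
    chi m b * Yrun b (m + 1) = ∑ j ∈ range (m + 1), Yrun b j * Yrun b (j + 1) := by
  rw [chi, sum_mul, ← sum_range_reflect (fun j => Yrun b j * Yrun b (j + 1))]
  refine sum_congr rfl fun i hi => ?_
  have him : i ≤ m := Nat.lt_succ_iff.mp (mem_range.mp hi)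
  have hcancel : (∏ t ∈ Icc (m + 1 - i) m, Y (b + 2 * (t : ℤ)) (-1)) *
      ∏ t ∈ Ico (m + 1 - i) (m + 1), Y (b + 2 * (t : ℤ)) 1 = 1 := by
    rw [← Ico_add_one_right_eq_Icc]
    exact prod_Y_neg_one_mul_prod_Y_one b _
  rw [Yrun_eq_mul_prod_Ico b (by omega : m + 1 - i ≤ m + 1),
    show m + 1 - 1 - i = m - i by omega, show m - i + 1 = m + 1 - i by omega, ← Yrun]
  linear_combination (Yrun b (m - i) * Yrun b (m + 1 - i)) * hcancel

lemma chi_mul_Yrun_mul_Yrun (b c : ℤ) {d m n : ℕ} (hc : c = b + 2 * d) (hn : d + m + 1 = n) :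
    chi m c * (Yrun b d * Yrun b n) = ∑ j ∈ Ico d n, Yrun b j * Yrun b (j + 1) := by
  subst hc hn
  rw [sum_Ico_eq_sum_range, show d + m + 1 - d = m + 1 by omega]
  calc chi m (b + 2 * d) * (Yrun b d * Yrun b (d + m + 1))
      = chi m (b + 2 * d) * Yrun (b + 2 * d) (m + 1) * (Yrun b d * Yrun b d) := by
        rw [add_assoc, Yrun_add]; ring
    _ = ∑ j ∈ range (m + 1), Yrun b (d + j) * Yrun b (d + j + 1) := by
        rw [chi_mul_Yrun_succ, sum_mul]
        refine sum_congr rfl fun j _ => ?_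
        rw [add_assoc, Yrun_add b d j, Yrun_add b d (j + 1)]
        ring

/-- The Ptolemy-type identity: for integers `1 ≤ d ≤ k+1 ≤ r` and any `a`,
`χ(k+1,a)·χ(r−d+1,a+2d) = χ(r+1,a)·χ(k−d+1,a+2d) + χ(d−1,a)·χ(r−k−1,a+2k+4)`. -/
theorem ptolemy (a : ℤ) (d k r : ℕ) (hd : 1 ≤ d) (hdk : d ≤ k + 1) (hkr : k + 1 ≤ r) :
    chi (k + 1) a * chi (r + 1 - d) (a + 2 * (d : ℤ)) =
      chi (r + 1) a * chi (k + 1 - d) (a + 2 * (d : ℤ)) +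
        chi (d - 1) a * chi (r - k - 1) (a + 2 * (k : ℤ) + 4) := by
  set S : ℕ → ℕ → R := fun i j => ∑ l ∈ Ico i j, Yrun a l * Yrun a (l + 1)
  have hleft : chi (k + 1) a * Yrun a (k + 2) = S 0 (k + 2) := by
    rw [chi_mul_Yrun_succ, range_eq_Ico]
  have hright : chi (r + 1) a * Yrun a (r + 2) = S 0 (r + 2) := by
    rw [chi_mul_Yrun_succ, range_eq_Ico]
  have hinit : chi (d - 1) a * Yrun a (d - 1 + 1) = S 0 (d - 1 + 1) := by
    rw [chi_mul_Yrun_succ, range_eq_Ico]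
  rw [Nat.sub_add_cancel hd] at hinit
  have hlong := chi_mul_Yrun_mul_Yrun a _ rfl (show d + (r + 1 - d) + 1 = r + 2 by omega)
  have hmid := chi_mul_Yrun_mul_Yrun a _ rfl (show d + (k + 1 - d) + 1 = k + 2 by omega)
  have htail := chi_mul_Yrun_mul_Yrun a (a + 2 * (k : ℤ) + 4) (d := k + 2)
    (by push_cast; ring) (show k + 2 + (r - k - 1) + 1 = r + 2 by omega)
  have hsums := sum_Ico_mul_sum_Ico_ptolemy (fun l => Yrun a l * Yrun a (l + 1))
    (Nat.zero_le d) (by omega : d ≤ k + 2) (by omega : k + 2 ≤ r + 2)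
  have hunit := (isUnit_Yrun a d).mul ((isUnit_Yrun a (k + 2)).mul (isUnit_Yrun a (r + 2)))
  apply hunit.mul_right_cancel
  linear_combination (chi (r + 1 - d) (a + 2 * d) * Yrun a d * Yrun a (r + 2)) * hleft
    + S 0 (k + 2) * hlong - (chi (k + 1 - d) (a + 2 * d) * Yrun a d * Yrun a (k + 2)) * hright
    - S 0 (r + 2) * hmid
    - (chi (r - k - 1) (a + 2 * k + 4) * Yrun a (k + 2) * Yrun a (r + 2)) * hinit
    - S 0 d * htail + hsums
end

section
/- For all natural numbers k and ℓ, the Laurent polynomial A^k·B^ℓ ∈ S contains a unique dominant monomial, namely Y10^{k+ℓ}·Y21^{ℓ} with coefficient 1: the coefficient of the monomial Y10^{a}·Y12^{b}·Y21^{c}·Y23^{d} in A^k·B^ℓ is 1 if (a,b,c,d) = (k+ℓ,0,ℓ,0), and is 0 for every other (a,b,c,d) with all of a,b,c,d ≥ 0. (Lemma 5.1.) -/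
/-!
`S = ℤ[Y10^{±1}, Y12^{±1}, Y21^{±1}, Y23^{±1}]` is the Laurent polynomial ring
over `ℤ` in four commuting variables, realised as the group algebra of the free
abelian group `Fin 4 →₀ ℤ`; the indices `0, 1, 2, 3` correspond to the variables
`Y10, Y12, Y21, Y23` respectively (`Yin = Y_{i,ε^n}`, `ε` a primitive fourth
root of unity; this is the case `g = sl₃`, `l = 2`).
-/

/-- The Laurent polynomial ring `ℤ[Y10^{±1}, Y12^{±1}, Y21^{±1}, Y23^{±1}]`. -/
abbrev S : Type := AddMonoidAlgebra ℤ (Fin 4 →₀ ℤ)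

/-- The monomial which is the `e`-th power of the `i`-th variable
(`i = 0, 1, 2, 3` for `Y10, Y12, Y21, Y23`). -/
noncomputable def Yv (i : Fin 4) (e : ℤ) : S :=
  AddMonoidAlgebra.single (Finsupp.single i e) 1

/-- `A = Y10 + Y21·Y12⁻¹ + Y23⁻¹`, the `ε`-character of `L(Y_{1,0})`. -/
noncomputable def A : S := Yv 0 1 + Yv 2 1 * Yv 1 (-1) + Yv 3 (-1)

/-- `B`, the `ε`-character of `L(Y_{1,0}Y_{2,1})`. -/
noncomputable def B : S :=
  Yv 0 1 * Yv 2 1 + Yv 0 1 * Yv 1 1 * Yv 3 (-1) + Yv 2 1 ^ 2 * Yv 1 (-1) +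
    2 * (Yv 2 1 * Yv 3 (-1)) + Yv 2 1 * Yv 0 (-1) * Yv 1 (-1) +
    Yv 1 1 * Yv 3 (-2) + Yv 0 (-1) * Yv 3 (-1)

/-- `C = Y21 + Y12·Y23⁻¹ + Y10⁻¹`, the `ε`-character of `L(Y_{2,1})`. -/
noncomputable def C : S := Yv 2 1 + Yv 1 1 * Yv 3 (-1) + Yv 0 (-1)

/-- `Λ₁ = Y10·Y12 + Y21·Y23·Y10⁻¹·Y12⁻¹ + Y21⁻¹·Y23⁻¹`, the `ε`-character of `L(𝐘₁)`. -/
noncomputable def Lam1 : S :=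
  Yv 0 1 * Yv 1 1 + Yv 2 1 * Yv 3 1 * Yv 0 (-1) * Yv 1 (-1) + Yv 2 (-1) * Yv 3 (-1)

/-- `Λ₂ = Y21·Y23 + Y10·Y12·Y21⁻¹·Y23⁻¹ + Y10⁻¹·Y12⁻¹`, the `ε`-character of `L(𝐘₂)`. -/
noncomputable def Lam2 : S :=
  Yv 2 1 * Yv 3 1 + Yv 0 1 * Yv 1 1 * Yv 2 (-1) * Yv 3 (-1) + Yv 0 (-1) * Yv 1 (-1)

/-- The ring automorphism `σ` of `S` determined by `σ(Y10)=Y12`, `σ(Y12)=Y10`,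
`σ(Y21)=Y23`, `σ(Y23)=Y21` (shift of the spectral parameter by `ε²`). -/
noncomputable def σ : S ≃ₐ[ℤ] S :=
  AddMonoidAlgebra.domCongr ℤ ℤ
    (Finsupp.domCongr (M := ℤ) ((Equiv.swap (0 : Fin 4) 1).trans (Equiv.swap 2 3)))

/-!
Grade `S` by the weight `u ↦ u 1 + 2 * u 3` (the exponent of `Y12` plus twice that of `Y23`).
Every monomial of `A` and of `B` has weight `≤ 0`, and their weight-zero parts are `Y10` and
`Y10·Y21`. On Laurent polynomials supported in nonpositive weight, taking the weight-zero part is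
multiplicative, so the weight-zero part of `A^k·B^ℓ` is the single monomial `Y10^{k+ℓ}·Y21^ℓ`.
A dominant monomial has weight `≥ 0`, so its coefficient in `A^k·B^ℓ` is its coefficient in that
weight-zero part.
-/

namespace AddMonoidAlgebra

variable {R M Γ : Type*} [Semiring R] [AddMonoid M] [AddCommMonoid Γ]

section Nonpos

variable [PartialOrder Γ] [IsOrderedAddMonoid Γ]

def nonposSubsemiring (F : M →+ Γ) : Subsemiring R[M] where
  carrier := {p | ∀ u ∈ p.coeff.support, F u ≤ 0}
  mul_mem' {p q} hp hq u hu := by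
    classical
    obtain ⟨a, ha, b, hb, rfl⟩ := Finset.mem_add.mp (support_coeff_mul_subset p q hu)
    rw [map_add]
    exact add_nonpos (hp a ha) (hq b hb)
  one_mem' u hu := by
    rw [one_def, coeff_single, Finsupp.mem_support_single] at hu
    simp [hu.1]
  add_mem' {p q} hp hq u hu := by
    classical
    rcases Finset.mem_union.mp (Finsupp.support_add hu) with h | h
    exacts [hp u h, hq u h]
  zero_mem' u hu := by simp at hu

variable {F : M →+ Γ}

lemma single_mem_nonposSubsemiring {u : M} (hu : F u ≤ 0) (r : R) :
    single u r ∈ nonposSubsemiring F := fun v hv => by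
  rw [coeff_single, Finsupp.mem_support_single] at hv
  exact hv.1 ▸ hu

lemma coeff_eq_zero_of_mem_nonposSubsemiring {p : R[M]} (hp : p ∈ nonposSubsemiring F) {u : M}
    (hu : 0 < F u) : p.coeff u = 0 :=
  Finsupp.notMem_support_iff.mp fun h => (hp u h).not_gt hu

end Nonpos

section GradeZero

variable [DecidableEq Γ]

def gradeZeroPart (F : M →+ Γ) (p : R[M]) : R[M] := ofCoeff (p.coeff.filter (F · = 0))

variable {F : M →+ Γ}

lemma coeff_gradeZeroPart (p : R[M]) (u : M) :
    (gradeZeroPart F p).coeff u = if F u = 0 then p.coeff u else 0 :=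
  Finsupp.filter_apply _ _ _

lemma support_gradeZeroPart_subset (p : R[M]) :
    (gradeZeroPart F p).coeff.support ⊆ p.coeff.support :=
  Finset.filter_subset _ _

lemma gradeZeroPart_add (p q : R[M]) :
    gradeZeroPart F (p + q) = gradeZeroPart F p + gradeZeroPart F q :=
  congrArg ofCoeff Finsupp.filter_add

lemma gradeZeroPart_single (u : M) (r : R) :
    gradeZeroPart F (single u r) = if F u = 0 then single u r else 0 := by
  ext v
  split_ifs with hu <;> by_cases huv : u = v <;> simp_all [coeff_gradeZeroPart]

lemma gradeZeroPart_one : gradeZeroPart F (1 : R[M]) = 1 := by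
  rw [one_def, gradeZeroPart_single, map_zero, if_pos rfl]

variable [PartialOrder Γ] [IsOrderedAddMonoid Γ]

lemma gradeZeroPart_mul {p q : R[M]} (hp : p ∈ nonposSubsemiring F)
    (hq : q ∈ nonposSubsemiring F) :
    gradeZeroPart F (p * q) = gradeZeroPart F p * gradeZeroPart F q := by
  classical
  ext u
  have hzero {a b : M} (ha : F a ≤ 0) (hb : F b ≤ 0) : F (a + b) = 0 ↔ F a = 0 ∧ F b = 0 := by
    rw [map_add]
    exact ⟨fun h => ⟨eq_zero_of_add_nonneg_left ha hb h.ge, eq_zero_of_add_nonneg_right ha hb h.ge⟩,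
      fun h => by rw [h.1, h.2, add_zero]⟩
  rw [coeff_gradeZeroPart, coeff_mul, coeff_mul,
    Finsupp.sum_of_support_subset _ (support_gradeZeroPart_subset p) _ (by simp),
    Finsupp.sum, Finset.ite_sum_zero]
  refine Finset.sum_congr rfl fun a ha => ?_
  rw [Finsupp.sum_of_support_subset _ (support_gradeZeroPart_subset q) _ (by simp),
    Finsupp.sum, Finset.ite_sum_zero]
  refine Finset.sum_congr rfl fun b hb => ?_
  simp only [coeff_gradeZeroPart]
  by_cases hab : a + b = u
  · subst hab
    simp only [hzero (hp a ha) (hq b hb)]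
    split_ifs <;> simp_all
  · simp [hab]

lemma gradeZeroPart_pow {p : R[M]} (hp : p ∈ nonposSubsemiring F) (n : ℕ) :
    gradeZeroPart F (p ^ n) = gradeZeroPart F p ^ n := by
  induction n with
  | zero => simp only [pow_zero, gradeZeroPart_one]
  | succ n ih => rw [pow_succ, gradeZeroPart_mul (pow_mem hp n) hp, ih, pow_succ]

lemma coeff_eq_coeff_gradeZeroPart {p : R[M]} (hp : p ∈ nonposSubsemiring F) {u : M}
    (hu : 0 ≤ F u) : p.coeff u = (gradeZeroPart F p).coeff u := by
  rw [coeff_gradeZeroPart]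
  split_ifs with h
  · rfl
  · exact coeff_eq_zero_of_mem_nonposSubsemiring hp (hu.lt_of_ne' h)

end GradeZero

end AddMonoidAlgebra

open AddMonoidAlgebra

noncomputable def weight : (Fin 4 →₀ ℤ) →+ ℤ := Finsupp.applyAddHom 1 + 2 • Finsupp.applyAddHom 3

lemma weight_apply (u : Fin 4 →₀ ℤ) : weight u = u 1 + 2 * u 3 := rfl

lemma A_mem_nonposSubsemiring : A ∈ nonposSubsemiring weight := by
  simp only [A, Yv, single_mul_single, mul_one]
  repeat' refine add_mem ?_ ?_
  all_goals exact single_mem_nonposSubsemiring (by simp [weight_apply]) _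

lemma B_mem_nonposSubsemiring : B ∈ nonposSubsemiring weight := by
  simp only [B, Yv, single_mul_single, single_pow, mul_one, one_pow, two_mul]
  repeat' refine add_mem ?_ ?_
  all_goals exact single_mem_nonposSubsemiring (by simp [weight_apply]) _

lemma gradeZeroPart_A : gradeZeroPart weight A = Yv 0 1 := by
  simp [A, Yv, single_mul_single, gradeZeroPart_add, gradeZeroPart_single, weight_apply]

lemma gradeZeroPart_B : gradeZeroPart weight B = Yv 0 1 * Yv 2 1 := by
  simp [B, Yv, single_mul_single, two_mul, gradeZeroPart_add, gradeZeroPart_single, weight_apply]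

lemma single_add_single_add_single_add_single_inj {a b c d a' b' c' d' : ℤ} :
    Finsupp.single (0 : Fin 4) a + Finsupp.single 1 b + Finsupp.single 2 c + Finsupp.single 3 d =
        Finsupp.single 0 a' + Finsupp.single 1 b' + Finsupp.single 2 c' + Finsupp.single 3 d' ↔
      (a, b, c, d) = (a', b', c', d') := by
  refine ⟨fun h => ?_, fun h => by simp_all⟩
  have h0 := DFunLike.congr_fun h 0
  have h1 := DFunLike.congr_fun h 1
  have h2 := DFunLike.congr_fun h 2
  have h3 := DFunLike.congr_fun h 3
  simp only [Finsupp.coe_add, Pi.add_apply, Finsupp.single_apply] at h0 h1 h2 h3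
  simp_all

lemma Yv_pow_mul_pow_eq_single (k ℓ : ℕ) :
    (Yv 0 1 ^ k * (Yv 0 1 * Yv 2 1) ^ ℓ : S) = single
      (Finsupp.single 0 ((k : ℤ) + ℓ) + Finsupp.single 1 0 + Finsupp.single 2 (ℓ : ℤ) +
        Finsupp.single 3 0) 1 := by
  simp only [Yv, single_mul_single, single_pow, one_pow, mul_one, Finsupp.single_zero, add_zero]
  congr 1
  simp only [Finsupp.smul_single, smul_add, nsmul_eq_mul, mul_one, Finsupp.single_add]
  abel

theorem unique_dominant_monomial_general (k ℓ : ℕ) (a b c d : ℤ)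
    (hb : 0 ≤ b) (hd : 0 ≤ d) :
    (A ^ k * B ^ ℓ).coeff
        (Finsupp.single (0 : Fin 4) a + Finsupp.single 1 b +
          Finsupp.single 2 c + Finsupp.single 3 d) =
      if (a, b, c, d) = ((k : ℤ) + (ℓ : ℤ), 0, (ℓ : ℤ), 0) then 1 else 0 := by
  have hA := A_mem_nonposSubsemiring
  have hB := B_mem_nonposSubsemiring
  have hdominant : 0 ≤ weight (Finsupp.single (0 : Fin 4) a + Finsupp.single 1 b +
      Finsupp.single 2 c + Finsupp.single 3 d) := by
    simpa [weight_apply] using add_nonneg hb (mul_nonneg zero_le_two hd)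
  rw [coeff_eq_coeff_gradeZeroPart (mul_mem (pow_mem hA k) (pow_mem hB ℓ)) hdominant,
    gradeZeroPart_mul (pow_mem hA k) (pow_mem hB ℓ), gradeZeroPart_pow hA, gradeZeroPart_pow hB,
    gradeZeroPart_A, gradeZeroPart_B, Yv_pow_mul_pow_eq_single, coeff_single, Finsupp.single_apply]
  exact if_congr (single_add_single_add_single_add_single_inj.trans eq_comm) rfl rfl

/-- Lemma 5.1: `A^k·B^ℓ` contains a unique dominant monomial, namely
`Y10^{k+ℓ}·Y21^{ℓ}` with coefficient 1. -/
theorem unique_dominant_monomial (k ℓ : ℕ) (a b c d : ℤ)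
    (ha : 0 ≤ a) (hb : 0 ≤ b) (hc : 0 ≤ c) (hd : 0 ≤ d) :
    (A ^ k * B ^ ℓ).coeff
        (Finsupp.single (0 : Fin 4) a + Finsupp.single 1 b +
          Finsupp.single 2 c + Finsupp.single 3 d) =
      if (a, b, c, d) = ((k : ℤ) + (ℓ : ℤ), 0, (ℓ : ℤ), 0) then 1 else 0 :=
  unique_dominant_monomial_general k ℓ a b c d hb hd
end

section
/- The identity B·(A·σ(C) − 1) = A³ + A²·Λ₂ + A·Λ₁ + 1 holds in S. (This is the second identity of Proposition 5.3 for i = 0: here A·σ(C) − 1 = χ_ε(L(Y_{1,0}Y_{2,3})), so the identity reads χ_ε(L(Y_{1,0}Y_{2,1}))·χ_ε(L(Y_{1,0}Y_{2,3})) = χ_ε(L(Y_{1,0}))³ + χ_ε(L(Y_{1,0}))²·χ_ε(L(𝐘₂)) + χ_ε(L(Y_{1,0}))·χ_ε(L(𝐘₁)) + 1; it is a generalised exchange relation of type G₂.) -/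
/-!
The identity is a statement about four independent invertible variables, so it suffices to check
it in a field: `S` is a domain (a group algebra of a torsion-free group over `ℤ`), and in its
field of fractions it becomes an identity of rational functions in four variables, which
clearing denominators reduces to a polynomial identity.
-/

lemma Yv_add (i : Fin 4) (a b : ℤ) : Yv i (a + b) = Yv i a * Yv i b := by
  simp [Yv, AddMonoidAlgebra.single_mul_single, Finsupp.single_add]

lemma Yv_mul_Yv_neg (i : Fin 4) (e : ℤ) : Yv i e * Yv i (-e) = 1 := by
  rw [← Yv_add, add_neg_cancel]
  simp [Yv, AddMonoidAlgebra.one_def]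

lemma isUnit_Yv (i : Fin 4) (e : ℤ) : IsUnit (Yv i e) :=
  .of_mul_eq_one _ (Yv_mul_Yv_neg i e)

lemma map_Yv_neg {K : Type*} [DivisionRing K] (φ : S →+* K) (i : Fin 4) (e : ℤ) :
    φ (Yv i (-e)) = (φ (Yv i e))⁻¹ :=
  eq_inv_of_mul_eq_one_right <| by rw [← map_mul, Yv_mul_Yv_neg, map_one]

lemma σ_Yv (i : Fin 4) (e : ℤ) :
    σ (Yv i e) = Yv ((Equiv.swap (0 : Fin 4) 1).trans (Equiv.swap 2 3) i) e := by
  simp [σ, Yv, AddMonoidAlgebra.domCongr_single]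

lemma σ_C : σ C = Yv 3 1 + Yv 0 1 * Yv 2 (-1) + Yv 1 (-1) := by
  simp only [C, map_add, map_mul, σ_Yv]
  rfl

theorem exchange_G2_i0_of_field {K : Type*} [Field K] (y10 y12 y21 y23 : K)
    (h10 : y10 ≠ 0) (h12 : y12 ≠ 0) (h21 : y21 ≠ 0) (h23 : y23 ≠ 0) :
    (y10 * y21 + y10 * y12 * y23⁻¹ + y21 ^ 2 * y12⁻¹ + 2 * (y21 * y23⁻¹) +
        y21 * y10⁻¹ * y12⁻¹ + y12 * y23⁻¹ ^ 2 + y10⁻¹ * y23⁻¹) *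
      ((y10 + y21 * y12⁻¹ + y23⁻¹) * (y23 + y10 * y21⁻¹ + y12⁻¹) - 1) =
    (y10 + y21 * y12⁻¹ + y23⁻¹) ^ 3 +
      (y10 + y21 * y12⁻¹ + y23⁻¹) ^ 2 *
        (y21 * y23 + y10 * y12 * y21⁻¹ * y23⁻¹ + y10⁻¹ * y12⁻¹) +
      (y10 + y21 * y12⁻¹ + y23⁻¹) *
        (y10 * y12 + y21 * y23 * y10⁻¹ * y12⁻¹ + y21⁻¹ * y23⁻¹) + 1 := by
  field_simp
  ring

/-- Proposition 5.3, second identity for `i = 0` (generalised exchange relation of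
type `G₂`): since `A·σ(C) − 1 = χ_ε(L(Y_{1,0}Y_{2,3}))`, it reads
`χ_ε(L(Y_{1,0}Y_{2,1}))·χ_ε(L(Y_{1,0}Y_{2,3})) = A³ + A²·Λ₂ + A·Λ₁ + 1`. -/
theorem exchange_G2_i0 : B * (A * σ C - 1) = A ^ 3 + A ^ 2 * Lam2 + A * Lam1 + 1 := by
  let φ := algebraMap S (FractionRing S)
  have hφ : ∀ i, φ (Yv i 1) ≠ 0 := fun i => ((isUnit_Yv i 1).map φ).ne_zero
  have hY23 : Yv 3 (-2) = Yv 3 (-1) ^ 2 := by rw [sq, ← Yv_add]; norm_num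
  apply IsFractionRing.injective S (FractionRing S)
  simp only [B, A, Lam1, Lam2, σ_C, hY23, map_add, map_sub, map_mul, map_pow, map_one,
    map_ofNat, map_Yv_neg]
  exact exchange_G2_i0_of_field _ _ _ _ (hφ 0) (hφ 1) (hφ 2) (hφ 3)
end
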